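/- Let A be a real tensor of size n×n×n₃, invertible with inverse A⁻¹, let E be a tensor of size n×n×n₃ with ‖A⁻¹‖₂·‖E‖₂ < 1, and set M = A+E (entrywise). Let B and K be tensors of size n×n₄×n₃ with B ≠ 0, let X be the solution of A*X = B, and let H be the unique tensor with M*(X+H) = B+K. Then ‖H‖₂/‖X‖₂ ≤ (κ₂/γ)·(‖E‖₂/‖A‖₂ + ‖K‖₂/‖B‖₂), where κ₂ = ‖A⁻¹‖₂·‖A‖₂ and γ = 1 − ‖A⁻¹‖₂·‖E‖₂. -/

import Mathlib

open scoped Matrix.Norms.L2Operator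

noncomputable section

/-- The t-product of third-order tensors. -/
def tProd {n₁ n₂ n₃ n₄ : ℕ} [NeZero n₃] (A : Fin n₁ → Fin n₂ → ZMod n₃ → ℝ)
    (B : Fin n₂ → Fin n₄ → ZMod n₃ → ℝ) : Fin n₁ → Fin n₄ → ZMod n₃ → ℝ :=
  fun i j k => ∑ l : Fin n₂, ∑ m : ZMod n₃, A i l (k - m) * B l j m

/-- The Frobenius norm of a third-order tensor. -/
def frobNorm {n₁ n₂ n₃ : ℕ} [NeZero n₃] (A : Fin n₁ → Fin n₂ → ZMod n₃ → ℝ) : ℝ :=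
  Real.sqrt (∑ i : Fin n₁, ∑ j : Fin n₂, ∑ k : ZMod n₃, (A i j k) ^ 2)

/-- The block circulant matrix of a third-order tensor. -/
def bcirc {n₁ n₂ n₃ : ℕ} (A : Fin n₁ → Fin n₂ → ZMod n₃ → ℝ) :
    Matrix (Fin n₁ × ZMod n₃) (Fin n₂ × ZMod n₃) ℝ :=
  fun p q => A p.1 q.1 (p.2 - q.2)

/-- The spectral norm of a third-order tensor: the L2 operator norm of its
block circulant matrix. -/
def specNorm {n₁ n₂ n₃ : ℕ} [NeZero n₃] (A : Fin n₁ → Fin n₂ → ZMod n₃ → ℝ) : ℝ :=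
  ‖bcirc A‖

/-- The identity tensor. -/
def tId (n n₃ : ℕ) : Fin n → Fin n → ZMod n₃ → ℝ :=
  fun i j k => if i = j ∧ k = 0 then 1 else 0

/-- The tensor transpose. -/
def tTrans {n₁ n₂ n₃ : ℕ} (A : Fin n₁ → Fin n₂ → ZMod n₃ → ℝ) :
    Fin n₂ → Fin n₁ → ZMod n₃ → ℝ :=
  fun i j k => A j i (-k)

/-- `X` is a Moore-Penrose inverse of `A`. -/
def IsMPInv {n₁ n₂ n₃ : ℕ} [NeZero n₃] (A : Fin n₁ → Fin n₂ → ZMod n₃ → ℝ)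
    (X : Fin n₂ → Fin n₁ → ZMod n₃ → ℝ) : Prop :=
  tProd (tProd A X) A = A ∧ tProd (tProd X A) X = X ∧
    tTrans (tProd A X) = tProd A X ∧ tTrans (tProd X A) = tProd X A

/-- The `i`-th DFT block of a third-order tensor. -/
def dftBlock {n₁ n₂ n₃ : ℕ} [NeZero n₃] (A : Fin n₁ → Fin n₂ → ZMod n₃ → ℝ) (i : ZMod n₃) :
    Matrix (Fin n₁) (Fin n₂) ℂ :=
  fun p q => ∑ k : ZMod n₃,
    Complex.exp (-2 * Real.pi * Complex.I * (i.val : ℂ) * (k.val : ℂ) / (n₃ : ℂ)) * (A p q k : ℂ)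

end

/-!
`bcirc` turns the t-product into matrix multiplication and the identity tensor into the
identity matrix, so this is the classical perturbation bound for the matrix system
`a x = b` with a left inverse `ai` of `a`. Subtracting the two systems gives
`a h = k - e (x + h)`, hence `h = ai (k - e (x + h))` and
`‖h‖ (1 - ‖ai‖ ‖e‖) ≤ ‖ai‖ (‖k‖ + ‖e‖ ‖x‖)`; dividing by `‖x‖` and using `‖b‖ ≤ ‖a‖ ‖x‖`
gives the bound.
-/

namespace Matrix

lemma mul_eq_sub_of_perturbed {α m p : Type*} [NonUnitalNonAssocRing α] [Fintype m]
    {a e : Matrix m m α} {x h b k : Matrix m p α}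
    (hx : a * x = b) (hh : (a + e) * (x + h) = b + k) : a * h = k - e * (x + h) := by
  rw [Matrix.add_mul, Matrix.mul_add, hx, add_assoc] at hh
  rw [eq_sub_iff_add_eq, add_left_cancel hh]

variable {𝕜 : Type*} [RCLike 𝕜] {m p : Type*} [Fintype m] [DecidableEq m] [Fintype p] [DecidableEq p]

lemma l2_opNorm_le_of_perturbed {a ai e : Matrix m m 𝕜} {x h b k : Matrix m p 𝕜}
    (hai : ai * a = 1) (hx : a * x = b) (hh : (a + e) * (x + h) = b + k) :
    ‖h‖ ≤ ‖ai‖ * (‖k‖ + ‖e‖ * (‖x‖ + ‖h‖)) := by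
  have hsolve : h = ai * (k - e * (x + h)) := by
    rw [← mul_eq_sub_of_perturbed hx hh, ← Matrix.mul_assoc, hai, Matrix.one_mul]
  calc ‖h‖ = ‖ai * (k - e * (x + h))‖ := congrArg _ hsolve
    _ ≤ ‖ai‖ * ‖k - e * (x + h)‖ := l2_opNorm_mul _ _
    _ ≤ ‖ai‖ * (‖k‖ + ‖e‖ * ‖x + h‖) := by
      gcongr
      exact (norm_sub_le _ _).trans (by gcongr; exact l2_opNorm_mul _ _)
    _ ≤ ‖ai‖ * (‖k‖ + ‖e‖ * (‖x‖ + ‖h‖)) := by gcongr; exact norm_add_le _ _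

theorem l2_opNorm_div_le_of_perturbed {a ai e : Matrix m m 𝕜} {x h b k : Matrix m p 𝕜}
    (hai : ai * a = 1) (he : ‖ai‖ * ‖e‖ < 1) (hb : b ≠ 0)
    (hx : a * x = b) (hh : (a + e) * (x + h) = b + k) :
    ‖h‖ / ‖x‖ ≤ (‖ai‖ * ‖a‖ / (1 - ‖ai‖ * ‖e‖)) * (‖e‖ / ‖a‖ + ‖k‖ / ‖b‖) := by
  have hx0 : 0 < ‖x‖ := norm_pos_iff.mpr fun h0 => hb (by rw [← hx, h0, Matrix.mul_zero])
  have ha0 : 0 < ‖a‖ := norm_pos_iff.mpr fun h0 => hb (by rw [← hx, h0, Matrix.zero_mul])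
  have hb0 : 0 < ‖b‖ := norm_pos_iff.mpr hb
  have hγ : 0 < 1 - ‖ai‖ * ‖e‖ := sub_pos.mpr he
  have hbx : ‖b‖ ≤ ‖a‖ * ‖x‖ := hx ▸ l2_opNorm_mul a x
  have hhk : ‖h‖ * (1 - ‖ai‖ * ‖e‖) ≤ ‖ai‖ * (‖k‖ + ‖e‖ * ‖x‖) := by
    linarith [l2_opNorm_le_of_perturbed hai hx hh]
  have hkx : ‖k‖ / ‖x‖ ≤ ‖a‖ * ‖k‖ / ‖b‖ :=
    calc ‖k‖ / ‖x‖ = ‖a‖ * ‖k‖ / (‖a‖ * ‖x‖) := (mul_div_mul_left _ _ ha0.ne').symm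
      _ ≤ ‖a‖ * ‖k‖ / ‖b‖ := by gcongr
  calc ‖h‖ / ‖x‖ ≤ ‖ai‖ * (‖k‖ + ‖e‖ * ‖x‖) / (1 - ‖ai‖ * ‖e‖) / ‖x‖ := by
        gcongr
        exact (le_div_iff₀ hγ).mpr hhk
    _ = ‖ai‖ * (‖k‖ / ‖x‖ + ‖e‖) / (1 - ‖ai‖ * ‖e‖) := by
        field_simp
    _ ≤ ‖ai‖ * (‖a‖ * ‖k‖ / ‖b‖ + ‖e‖) / (1 - ‖ai‖ * ‖e‖) := by gcongr
    _ = (‖ai‖ * ‖a‖ / (1 - ‖ai‖ * ‖e‖)) * (‖e‖ / ‖a‖ + ‖k‖ / ‖b‖) := by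
        field_simp
        ring

end Matrix

section BlockCirculant

variable {n₁ n₂ n₃ n₄ : ℕ}

lemma bcirc_add (A E : Fin n₁ → Fin n₂ → ZMod n₃ → ℝ) :
    bcirc (A + E) = bcirc A + bcirc E :=
  rfl

lemma bcirc_tProd [NeZero n₃] (A : Fin n₁ → Fin n₂ → ZMod n₃ → ℝ)
    (B : Fin n₂ → Fin n₄ → ZMod n₃ → ℝ) : bcirc (tProd A B) = bcirc A * bcirc B := by
  ext p q
  simp only [bcirc, tProd, Matrix.mul_apply, Fintype.sum_prod_type]
  refine Finset.sum_congr rfl fun l _ => ?_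
  refine Fintype.sum_equiv (Equiv.addRight q.2) _ _ fun m => ?_
  rw [Equiv.coe_addRight, add_sub_cancel_right, sub_add_eq_sub_sub_swap]

lemma bcirc_tId (n : ℕ) : bcirc (tId n n₃) = 1 := by
  ext p q
  simp only [bcirc, tId, Matrix.one_apply, Prod.ext_iff, sub_eq_zero]

lemma bcirc_injective : Function.Injective (bcirc (n₁ := n₁) (n₂ := n₂) (n₃ := n₃)) :=
  fun A B h => funext₃ fun i j k => by simpa [bcirc] using congrFun₂ h (i, k) (j, 0)

end BlockCirculant

theorem perturbed_system_spectral_bound_general (n n₃ n₄ : ℕ) [NeZero n₃]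
    (A Ainv E : Fin n → Fin n → ZMod n₃ → ℝ)
    (B K X H : Fin n → Fin n₄ → ZMod n₃ → ℝ)
    (hA₂ : tProd Ainv A = tId n n₃)
    (hE : specNorm Ainv * specNorm E < 1)
    (hB : B ≠ 0)
    (hX : tProd A X = B)
    (hH : tProd (A + E) (X + H) = B + K) :
    specNorm H / specNorm X ≤
      (specNorm Ainv * specNorm A / (1 - specNorm Ainv * specNorm E)) *
        (specNorm E / specNorm A + specNorm K / specNorm B) := by
  have hai : bcirc Ainv * bcirc A = 1 := by rw [← bcirc_tProd, hA₂, bcirc_tId]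
  have hx : bcirc A * bcirc X = bcirc B := by rw [← bcirc_tProd, hX]
  have hh : (bcirc A + bcirc E) * (bcirc X + bcirc H) = bcirc B + bcirc K := by
    rw [← bcirc_add, ← bcirc_add, ← bcirc_tProd, hH, bcirc_add]
  have hb : bcirc B ≠ 0 := bcirc_injective.ne hB
  exact Matrix.l2_opNorm_div_le_of_perturbed hai hE hb hx hh

theorem perturbed_system_spectral_bound (n n₃ n₄ : ℕ) [NeZero n₃]
    (hn : 0 < n) (hn₄ : 0 < n₄)
    (A Ainv E : Fin n → Fin n → ZMod n₃ → ℝ)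
    (B K X H : Fin n → Fin n₄ → ZMod n₃ → ℝ)
    (hA₁ : tProd A Ainv = tId n n₃) (hA₂ : tProd Ainv A = tId n n₃)
    (hE : specNorm Ainv * specNorm E < 1)
    (hB : B ≠ 0)
    (hX : tProd A X = B)
    (hH : tProd (A + E) (X + H) = B + K) :
    specNorm H / specNorm X ≤
      (specNorm Ainv * specNorm A / (1 - specNorm Ainv * specNorm E)) *
        (specNorm E / specNorm A + specNorm K / specNorm B) :=
  perturbed_system_spectral_bound_general n n₃ n₄ A Ainv E B K X H hA₂ hE hB hX hH
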